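/- arXiv:1603.03477 — 5 statements merged into one kernel-verified Lean document; each statement's English description precedes it below -/
import Mathlib

section
/- Let B be the incidence matrix of a connected graph, W ≻ 0 diagonal (edge weights), R ⪰ 0 diagonal with R_i ≻ 0 for at least one node i, M ≻ 0, and v a constant vector. Then the system ṗ = -R M^{-1} p - B W q + v, q̇ = B^T M^{-1} p, restricted to the invariant set {q ∈ im(B^T)}, has a unique equilibrium (p̄, q̄) with p̄ = M·1·β where β = (1^T R 1)^{-1} 1^T v. -/
/-!
At an equilibrium, `q̇ = 0` puts `M⁻¹ p̄` in `ker Bᵀ`, which for a connected graph consists of the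
constant vectors `β 𝟙`. The columns of `B` sum to zero, so summing `ṗ = 0` over the nodes kills
`B W q̄` and pins down `β`. What remains is `B W Bᵀ s = v - β R 𝟙` for `q̄ = Bᵀ s`. The weighted
Laplacian `B W Bᵀ` has kernel `span 𝟙`, hence by a dimension count range `𝟙^⊥`, which contains the
right-hand side; and `B W` is injective on `im Bᵀ` because `W ≻ 0`.
-/

open Matrix

theorem LinearMap.range_eq_ker_of_comp_eq_zero_of_finrank_eq {K V U : Type*} [Field K]
    [AddCommGroup V] [Module K V] [FiniteDimensional K V]
    [AddCommGroup U] [Module K U] [FiniteDimensional K U]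
    {L : V →ₗ[K] V} {f : V →ₗ[K] U} (hfL : f ∘ₗ L = 0) (hf : Function.Surjective f)
    (hL : Module.finrank K (ker L) = Module.finrank K U) : range L = ker f := by
  refine Submodule.eq_of_le_of_finrank_eq (range_le_ker_iff.mpr hfL) ?_
  have hrankL := L.finrank_range_add_finrank_ker
  have hrankf := f.finrank_range_add_finrank_ker
  rw [range_eq_top.mpr hf, finrank_top] at hrankf
  omega

theorem SimpleGraph.Reachable.eq_of_forall_adj {V α : Type*} {G : SimpleGraph V} {f : V → α}
    (hf : ∀ i j, G.Adj i j → f i = f j) {i j : V} (h : G.Reachable i j) : f i = f j := by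
  obtain ⟨w⟩ := h
  induction w with
  | nil => rfl
  | cons hadj _ ih => exact (hf _ _ hadj).trans ih

section Incidence

variable {V ι 𝕜 : Type*} [DecidableEq V] [CommRing 𝕜]

def IsIncidenceMatrix (ends : ι → V × V) (B : Matrix V ι 𝕜) : Prop :=
  ∀ i k, B i k = if i = (ends k).1 then 1 else if i = (ends k).2 then -1 else 0

variable [Fintype V] {ends : ι → V × V} {B : Matrix V ι 𝕜}

theorem IsIncidenceMatrix.transpose_mulVec_apply (hB : IsIncidenceMatrix ends B)
    (hloop : ∀ k, (ends k).1 ≠ (ends k).2) (x : V → 𝕜) (k : ι) :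
    (Bᵀ *ᵥ x) k = x (ends k).1 - x (ends k).2 := by
  have hcol (i : V) :
      B i k = (if i = (ends k).1 then 1 else 0) - (if i = (ends k).2 then 1 else 0) := by
    rw [hB]
    rcases eq_or_ne i (ends k).1 with rfl | h1
    · simp [hloop k]
    · rcases eq_or_ne i (ends k).2 with rfl | h2 <;> simp [*]
  simp [mulVec, dotProduct, hcol, sub_mul]

theorem IsIncidenceMatrix.transpose_mulVec_smul_one (hB : IsIncidenceMatrix ends B)
    (hloop : ∀ k, (ends k).1 ≠ (ends k).2) (c : 𝕜) : Bᵀ *ᵥ (c • 1) = 0 := by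
  ext k
  simp [hB.transpose_mulVec_apply hloop]

theorem IsIncidenceMatrix.sum_mulVec [Fintype ι] (hB : IsIncidenceMatrix ends B)
    (hloop : ∀ k, (ends k).1 ≠ (ends k).2) (y : ι → 𝕜) : ∑ i, (B *ᵥ y) i = 0 := by
  rw [← one_dotProduct, dotProduct_mulVec, ← mulVec_transpose, ← one_smul 𝕜 (1 : V → 𝕜),
    hB.transpose_mulVec_smul_one hloop, zero_dotProduct]

theorem IsIncidenceMatrix.exists_eq_smul_one_of_transpose_mulVec_eq_zero
    (hB : IsIncidenceMatrix ends B) (hloop : ∀ k, (ends k).1 ≠ (ends k).2)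
    {G : SimpleGraph V} (hconn : G.Connected)
    (hcover : ∀ i j, G.Adj i j → ∃ k, ends k = (i, j) ∨ ends k = (j, i))
    {x : V → 𝕜} (hx : Bᵀ *ᵥ x = 0) : ∃ c : 𝕜, x = c • 1 := by
  have hedge (k : ι) : x (ends k).1 = x (ends k).2 := by
    rw [← sub_eq_zero, ← hB.transpose_mulVec_apply hloop, hx, Pi.zero_apply]
  have hadj (i j : V) (hij : G.Adj i j) : x i = x j := by
    obtain ⟨k, hk | hk⟩ := hcover i j hij
    · simpa [hk] using hedge k
    · simpa [hk] using (hedge k).symm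
  obtain ⟨i₀⟩ := hconn.nonempty
  exact ⟨x i₀, funext fun j => by simpa using (hconn j i₀).eq_of_forall_adj hadj⟩

end Incidence

section WeightedLaplacian

variable {V ι : Type*} [Fintype V] [Fintype ι] {B : Matrix V ι ℝ} {W : Matrix ι ι ℝ}

theorem Matrix.PosDef.mul_mul_transpose_mulVec_eq_zero_iff (hW : W.PosDef) {x : V → ℝ} :
    (B * W * Bᵀ) *ᵥ x = 0 ↔ Bᵀ *ᵥ x = 0 := by
  refine ⟨fun hx => ?_, fun hx => by rw [← mulVec_mulVec, hx, mulVec_zero]⟩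
  by_contra hne
  have hquad : Bᵀ *ᵥ x ⬝ᵥ (W *ᵥ (Bᵀ *ᵥ x)) = x ⬝ᵥ ((B * W * Bᵀ) *ᵥ x) := by
    rw [← mulVec_mulVec, ← mulVec_mulVec, dotProduct_mulVec x B, mulVec_transpose]
  have hpos := hW.dotProduct_mulVec_pos hne
  rw [star_trivial, hquad, hx, dotProduct_zero] at hpos
  exact lt_irrefl 0 hpos

theorem Matrix.PosDef.transpose_mulVec_eq_of_mul_mulVec_eq (hW : W.PosDef) {s s' : V → ℝ}
    (h : (B * W) *ᵥ (Bᵀ *ᵥ s) = (B * W) *ᵥ (Bᵀ *ᵥ s')) : Bᵀ *ᵥ s = Bᵀ *ᵥ s' := by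
  rw [← sub_eq_zero, ← mulVec_sub, ← hW.mul_mul_transpose_mulVec_eq_zero_iff, ← mulVec_mulVec,
    mulVec_sub, mulVec_sub, h, sub_self]

theorem IsIncidenceMatrix.exists_mul_mul_transpose_mulVec_eq_of_sum_eq_zero [DecidableEq V]
    {ends : ι → V × V} (hB : IsIncidenceMatrix ends B) (hloop : ∀ k, (ends k).1 ≠ (ends k).2)
    {G : SimpleGraph V} (hconn : G.Connected)
    (hcover : ∀ i j, G.Adj i j → ∃ k, ends k = (i, j) ∨ ends k = (j, i))
    (hW : W.PosDef) {t : V → ℝ} (ht : ∑ i, t i = 0) : ∃ s, (B * W * Bᵀ) *ᵥ s = t := by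
  have := hconn.nonempty
  let f : (V → ℝ) →ₗ[ℝ] ℝ := dotProductBilin ℝ ℝ 1
  have hker : LinearMap.ker (B * W * Bᵀ).mulVecLin = Submodule.span ℝ {1} := by
    ext x
    rw [LinearMap.mem_ker, mulVecLin_apply, hW.mul_mul_transpose_mulVec_eq_zero_iff,
      Submodule.mem_span_singleton]
    constructor
    · intro hx
      obtain ⟨c, rfl⟩ := hB.exists_eq_smul_one_of_transpose_mulVec_eq_zero hloop hconn hcover hx
      exact ⟨c, rfl⟩
    · rintro ⟨c, rfl⟩
      exact hB.transpose_mulVec_smul_one hloop c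
  have hrange : LinearMap.range (B * W * Bᵀ).mulVecLin = LinearMap.ker f := by
    refine LinearMap.range_eq_ker_of_comp_eq_zero_of_finrank_eq ?_ ?_ ?_
    · refine LinearMap.ext fun x => ?_
      change (1 : V → ℝ) ⬝ᵥ ((B * W * Bᵀ) *ᵥ x) = 0
      rw [one_dotProduct, ← mulVec_mulVec, ← mulVec_mulVec, hB.sum_mulVec hloop]
    · exact fun c => ⟨Pi.single (Classical.arbitrary V) c, by simp [f]⟩
    · rw [hker, finrank_span_singleton one_ne_zero, Module.finrank_self]
  have ht' : t ∈ LinearMap.ker f := by simpa [f, one_dotProduct] using ht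
  rw [← hrange] at ht'
  exact ht'

end WeightedLaplacian

section Network

variable {V ι : Type*} [Fintype V] [DecidableEq V] [Fintype ι]

/-- `z = (p, q)`; the last two conjuncts are `ṗ = 0` and `q̇ = 0`. -/
def IsNetworkEquilibrium (B : Matrix V ι ℝ) (M R : Matrix V V ℝ) (W : Matrix ι ι ℝ) (v : V → ℝ)
    (z : (V → ℝ) × (ι → ℝ)) : Prop :=
  (∃ s, z.2 = Bᵀ *ᵥ s) ∧ -(R *ᵥ (M⁻¹ *ᵥ z.1)) - (B * W) *ᵥ z.2 + v = 0 ∧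
    Bᵀ *ᵥ (M⁻¹ *ᵥ z.1) = 0

theorem isNetworkEquilibrium_iff {ends : ι → V × V} {B : Matrix V ι ℝ} {M : Matrix V V ℝ}
    {r : V → ℝ} {W : Matrix ι ι ℝ} {v : V → ℝ}
    (hB : IsIncidenceMatrix ends B) (hloop : ∀ k, (ends k).1 ≠ (ends k).2)
    {G : SimpleGraph V} (hconn : G.Connected)
    (hcover : ∀ i j, G.Adj i j → ∃ k, ends k = (i, j) ∨ ends k = (j, i))
    (hr : ∑ i, r i ≠ 0) {β : ℝ} (hβ : β * ∑ i, r i = ∑ i, v i) {z : (V → ℝ) × (ι → ℝ)} :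
    IsNetworkEquilibrium B M (diagonal r) W v z ↔
      M⁻¹ *ᵥ z.1 = β • 1 ∧ ∃ s, z.2 = Bᵀ *ᵥ s ∧ (B * W * Bᵀ) *ᵥ s = v - β • r := by
  have hbalance (c : ℝ) (q : ι → ℝ) :
      -(diagonal r *ᵥ (c • 1)) - (B * W) *ᵥ q + v = 0 ↔ (B * W) *ᵥ q = v - c • r := by
    have hdiag : diagonal r *ᵥ (c • 1) = c • r := by ext i; simp [mulVec_diagonal, mul_comm]
    rw [hdiag]
    constructor <;> intro h <;> linear_combination -h
  constructor
  · rintro ⟨⟨s, hs⟩, hforce, hvel⟩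
    obtain ⟨c, hc⟩ := hB.exists_eq_smul_one_of_transpose_mulVec_eq_zero hloop hconn hcover hvel
    rw [hc, hbalance] at hforce
    have hcβ : c = β := by
      have hsum := congrArg (fun x => ∑ i, x i) hforce
      simp only [← mulVec_mulVec, hB.sum_mulVec hloop, Pi.sub_apply, Pi.smul_apply,
        smul_eq_mul, Finset.sum_sub_distrib, ← Finset.mul_sum] at hsum
      exact mul_right_cancel₀ hr (by linarith)
    subst hcβ
    exact ⟨hc, s, hs, by rw [← mulVec_mulVec, ← hs, hforce]⟩
  · rintro ⟨hu, s, hs, hLs⟩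
    refine ⟨⟨s, hs⟩, ?_, ?_⟩
    · rw [hu, hbalance, hs, mulVec_mulVec, hLs]
    · rw [hu]
      exact hB.transpose_mulVec_smul_one hloop β

end Network

theorem unique_equilibrium_general (n m : ℕ)
    (G : SimpleGraph (Fin n)) (hconn : G.Connected)
    (ends : Fin m → Fin n × Fin n)
    (hadj : ∀ k, G.Adj (ends k).1 (ends k).2)
    (hcover : ∀ i j, G.Adj i j → ∃ k, ends k = (i, j) ∨ ends k = (j, i))
    (B : Matrix (Fin n) (Fin m) ℝ)
    (hB : ∀ i k, B i k =
      if i = (ends k).1 then 1 else if i = (ends k).2 then -1 else 0)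
    (M R : Matrix (Fin n) (Fin n) ℝ) (W : Matrix (Fin m) (Fin m) ℝ)
    (hM : M.PosDef)
    (hRdiag : ∀ i j, i ≠ j → R i j = 0) (hRnn : ∀ i, 0 ≤ R i i)
    (hRpos : ∃ i, 0 < R i i)
    (hWdiag : ∀ i j, i ≠ j → W i j = 0) (hWpos : ∀ i, 0 < W i i)
    (v : Fin n → ℝ) :
    (∃! z : (Fin n → ℝ) × (Fin m → ℝ),
        (∃ s : Fin n → ℝ, z.2 = Bᵀ.mulVec s) ∧
        -(R.mulVec (M⁻¹.mulVec z.1)) - (B * W).mulVec z.2 + v = 0 ∧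
        Bᵀ.mulVec (M⁻¹.mulVec z.1) = 0) ∧
      (∀ z : (Fin n → ℝ) × (Fin m → ℝ),
        ((∃ s : Fin n → ℝ, z.2 = Bᵀ.mulVec s) ∧
          -(R.mulVec (M⁻¹.mulVec z.1)) - (B * W).mulVec z.2 + v = 0 ∧
          Bᵀ.mulVec (M⁻¹.mulVec z.1) = 0) →
        z.1 = ((∑ i, ∑ j, R i j)⁻¹ * ∑ i, v i) • M.mulVec (fun _ => 1)) := by
  obtain ⟨r, rfl⟩ : ∃ r, R = diagonal r := ⟨_, (IsDiag.diagonal_diag hRdiag).symm⟩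
  replace hB : IsIncidenceMatrix ends B := hB
  have hloop (k : Fin m) : (ends k).1 ≠ (ends k).2 := (hadj k).ne
  have hW : W.PosDef := IsDiag.diagonal_diag hWdiag ▸ posDef_diagonal_iff.mpr hWpos
  have hMdet : IsUnit M.det := isUnit_iff_ne_zero.mpr hM.det_pos.ne'
  simp only [diagonal_apply_eq] at hRnn hRpos
  have hr : 0 < ∑ i, r i := by
    obtain ⟨i, hi⟩ := hRpos
    exact Finset.sum_pos' (fun j _ => hRnn j) ⟨i, Finset.mem_univ i, hi⟩
  set β := (∑ i, ∑ j, diagonal r i j)⁻¹ * ∑ i, v i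
  have hβ : β * ∑ i, r i = ∑ i, v i := by
    simp only [β, diagonal_apply, Finset.sum_ite_eq, Finset.mem_univ, if_true]
    field_simp
  have hequil (z) := isNetworkEquilibrium_iff (M := M) (W := W) (z := z) hB hloop hconn hcover
    hr.ne' hβ
  have hfst (z) (hz : IsNetworkEquilibrium B M (diagonal r) W v z) : z.1 = β • M *ᵥ 1 := by
    rw [← mulVec_smul, ← ((hequil z).mp hz).1, mulVec_mulVec, mul_nonsing_inv _ hMdet, one_mulVec]
  obtain ⟨s, hs⟩ := hB.exists_mul_mul_transpose_mulVec_eq_of_sum_eq_zero hloop hconn hcover hW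
    (t := v - β • r) (by simp [Finset.sum_sub_distrib, ← Finset.mul_sum, hβ])
  refine ⟨⟨(β • M *ᵥ 1, Bᵀ *ᵥ s), (hequil _).mpr ⟨?_, s, rfl, hs⟩,
    fun z hz => Prod.ext (hfst z hz) ?_⟩, hfst⟩
  · rw [← mulVec_smul, mulVec_mulVec, nonsing_inv_mul _ hMdet, one_mulVec]
  · obtain ⟨-, s', hs', hLs'⟩ := (hequil z).mp hz
    rw [hs']
    exact hW.transpose_mulVec_eq_of_mul_mulVec_eq (by rw [mulVec_mulVec, mulVec_mulVec, hLs', hs])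

/-- The mass-spring-damper network `ṗ = -R M⁻¹ p - B W q + v`, `q̇ = Bᵀ M⁻¹ p`,
restricted to the invariant set `{q ∈ im Bᵀ}`, has a unique equilibrium `(p̄, q̄)`,
and `p̄ = β • M 𝟙` with `β = (𝟙ᵀ R 𝟙)⁻¹ 𝟙ᵀ v`. -/
theorem unique_equilibrium (n m : ℕ) (hn : 0 < n)
    (G : SimpleGraph (Fin n)) (hconn : G.Connected)
    (ends : Fin m → Fin n × Fin n)
    (hadj : ∀ k, G.Adj (ends k).1 (ends k).2)
    (hcover : ∀ i j, G.Adj i j → ∃ k, ends k = (i, j) ∨ ends k = (j, i))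
    (B : Matrix (Fin n) (Fin m) ℝ)
    (hB : ∀ i k, B i k =
      if i = (ends k).1 then 1 else if i = (ends k).2 then -1 else 0)
    (M R : Matrix (Fin n) (Fin n) ℝ) (W : Matrix (Fin m) (Fin m) ℝ)
    (hM : M.PosDef)
    (hRdiag : ∀ i j, i ≠ j → R i j = 0) (hRnn : ∀ i, 0 ≤ R i i)
    (hRpos : ∃ i, 0 < R i i)
    (hWdiag : ∀ i j, i ≠ j → W i j = 0) (hWpos : ∀ i, 0 < W i i)
    (v : Fin n → ℝ) :
    (∃! z : (Fin n → ℝ) × (Fin m → ℝ),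
        (∃ s : Fin n → ℝ, z.2 = Bᵀ.mulVec s) ∧
        -(R.mulVec (M⁻¹.mulVec z.1)) - (B * W).mulVec z.2 + v = 0 ∧
        Bᵀ.mulVec (M⁻¹.mulVec z.1) = 0) ∧
      (∀ z : (Fin n → ℝ) × (Fin m → ℝ),
        ((∃ s : Fin n → ℝ, z.2 = Bᵀ.mulVec s) ∧
          -(R.mulVec (M⁻¹.mulVec z.1)) - (B * W).mulVec z.2 + v = 0 ∧
          Bᵀ.mulVec (M⁻¹.mulVec z.1) = 0) →
        z.1 = ((∑ i, ∑ j, R i j)⁻¹ * ∑ i, v i) • M.mulVec (fun _ => 1)) :=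
  unique_equilibrium_general n m G hconn ends hadj hcover B hB M R W hM hRdiag hRnn hRpos hWdiag
    hWpos v
end

section
/- Let L = [[L_dd, L_di],[L_di^T, L_uu]] be the weighted Laplacian of a connected graph with both node groups nonempty, and let L̃_u = L_uu - L_di^T L_dd^{-1} L_di be the Schur complement (Kron reduction). Then L̃_u is symmetric positive semidefinite and ker(L̃_u) = span{1}. -/
open Matrix
open scoped ComplexOrder

/-!
When `A` is invertible, the kernel vectors of `fromBlocks A B C D` are exactly the
`(-A⁻¹ B x, x)` with `(D - C A⁻¹ B) x = 0`, so the kernel of the Schur complement is the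
projection of the kernel of the full matrix onto the second block; for a connected Laplacian
that projection of `span 𝟙` is again `span 𝟙`.
Positive semidefiniteness is the Schur complement criterion, which applies because a positive
semidefinite invertible block is positive definite.
-/

namespace Matrix

variable {m n : Type*}

theorem IsHermitian.eq_fromBlocks_submatrix {α : Type*} [Star α]
    {M : Matrix (m ⊕ n) (m ⊕ n) α} (hM : M.IsHermitian) :
    M = Matrix.fromBlocks (M.submatrix Sum.inl Sum.inl) (M.submatrix Sum.inl Sum.inr)
      (M.submatrix Sum.inl Sum.inr)ᴴ (M.submatrix Sum.inr Sum.inr) := by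
  ext (i | i) (j | j)
  · rfl
  · rfl
  · exact (hM.apply (Sum.inr i) (Sum.inl j)).symm
  · rfl

variable [Fintype m] [Fintype n] [DecidableEq m]

section CommRing

variable {R : Type*} [CommRing R] {A : Matrix m m R} {B : Matrix m n R} {C : Matrix n m R}
  {D : Matrix n n R}

theorem fromBlocks_mulVec_sum_elim_eq_zero_iff (hA : IsUnit A.det) (y : m → R) (x : n → R) :
    fromBlocks A B C D *ᵥ Sum.elim y x = 0 ↔
      y = -((A⁻¹ * B) *ᵥ x) ∧ (D - C * A⁻¹ * B) *ᵥ x = 0 := by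
  have first_row_eq_zero : A *ᵥ y + B *ᵥ x = 0 ↔ y = -((A⁻¹ * B) *ᵥ x) := by
    constructor
    · intro h
      calc y = A⁻¹ *ᵥ (A *ᵥ y) := by rw [mulVec_mulVec, nonsing_inv_mul _ hA, one_mulVec]
        _ = A⁻¹ *ᵥ -(B *ᵥ x) := by rw [eq_neg_of_add_eq_zero_left h]
        _ = -((A⁻¹ * B) *ᵥ x) := by rw [mulVec_neg, mulVec_mulVec]
    · rintro rfl
      rw [mulVec_neg, mulVec_mulVec, ← Matrix.mul_assoc, mul_nonsing_inv _ hA, Matrix.one_mul,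
        neg_add_cancel]
  rw [fromBlocks_mulVec, Sum.elim_comp_inl, Sum.elim_comp_inr, ← Sum.elim_zero_zero,
    Sum.elim_eq_iff, first_row_eq_zero]
  refine and_congr_right fun hy => ?_
  rw [hy, mulVec_neg, mulVec_mulVec, ← Matrix.mul_assoc, sub_mulVec, neg_add_eq_sub]

theorem schur_complement_mulVec_eq_zero_iff (hA : IsUnit A.det) (x : n → R) :
    (D - C * A⁻¹ * B) *ᵥ x = 0 ↔ ∃ y, fromBlocks A B C D *ᵥ Sum.elim y x = 0 := by
  simp_rw [fromBlocks_mulVec_sum_elim_eq_zero_iff hA]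
  exact ⟨fun h => ⟨_, rfl, h⟩, fun ⟨_, _, h⟩ => h⟩

end CommRing

theorem PosSemidef.schur_complement {𝕜 : Type*} [RCLike 𝕜] {A : Matrix m m 𝕜}
    {B : Matrix m n 𝕜} {D : Matrix n n 𝕜} (h : (fromBlocks A B Bᴴ D).PosSemidef)
    (hA : IsUnit A) : (D - Bᴴ * A⁻¹ * B).PosSemidef := by
  have hApos : A.PosDef := (h.submatrix (Sum.inl : m → m ⊕ n)).posDef_iff_isUnit.mpr hA
  have := hA.invertible
  exact (PosDef.fromBlocks₁₁ B D hApos).mp h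

end Matrix

theorem kron_reduction_laplacian_general (nd nu : ℕ)
    (L : Matrix (Fin nd ⊕ Fin nu) (Fin nd ⊕ Fin nu) ℝ)
    (hL : L.PosSemidef)
    (hker : ∀ x : Fin nd ⊕ Fin nu → ℝ, L.mulVec x = 0 ↔ ∃ c : ℝ, x = fun _ => c)
    (hdd : IsUnit (L.submatrix Sum.inl Sum.inl)) :
    (L.submatrix Sum.inr Sum.inr -
        (L.submatrix Sum.inl Sum.inr)ᵀ * (L.submatrix Sum.inl Sum.inl)⁻¹ *
          L.submatrix Sum.inl Sum.inr).PosSemidef ∧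
      ∀ x : Fin nu → ℝ,
        (L.submatrix Sum.inr Sum.inr -
          (L.submatrix Sum.inl Sum.inr)ᵀ * (L.submatrix Sum.inl Sum.inl)⁻¹ *
            L.submatrix Sum.inl Sum.inr).mulVec x = 0 ↔ ∃ c : ℝ, x = fun _ => c := by
  have hblocks := hL.isHermitian.eq_fromBlocks_submatrix
  rw [← conjTranspose_eq_transpose_of_trivial]
  refine ⟨(hblocks ▸ hL).schur_complement hdd, fun x => ?_⟩
  rw [schur_complement_mulVec_eq_zero_iff ((isUnit_iff_isUnit_det _).mp hdd), ← hblocks]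
  simp_rw [hker]
  constructor
  · rintro ⟨y, c, h⟩
    exact ⟨c, funext fun i => congrFun h (Sum.inr i)⟩
  · rintro ⟨c, rfl⟩
    exact ⟨fun _ => c, c, Sum.elim_const_const c⟩

/-- Kron reduction: the Schur complement `L̃_u = L_uu - L_diᵀ L_dd⁻¹ L_di` of a
connected weighted Laplacian is PSD with `ker L̃_u = span 𝟙`. -/
theorem kron_reduction_laplacian (nd nu : ℕ) (hnd : 0 < nd) (hnu : 0 < nu)
    (L : Matrix (Fin nd ⊕ Fin nu) (Fin nd ⊕ Fin nu) ℝ)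
    (hL : L.PosSemidef)
    (hker : ∀ x : Fin nd ⊕ Fin nu → ℝ, L.mulVec x = 0 ↔ ∃ c : ℝ, x = fun _ => c)
    (hdd : IsUnit (L.submatrix Sum.inl Sum.inl)) :
    (L.submatrix Sum.inr Sum.inr -
        (L.submatrix Sum.inl Sum.inr)ᵀ * (L.submatrix Sum.inl Sum.inl)⁻¹ *
          L.submatrix Sum.inl Sum.inr).PosSemidef ∧
      ∀ x : Fin nu → ℝ,
        (L.submatrix Sum.inr Sum.inr -
          (L.submatrix Sum.inl Sum.inr)ᵀ * (L.submatrix Sum.inl Sum.inl)⁻¹ *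
            L.submatrix Sum.inl Sum.inr).mulVec x = 0 ↔ ∃ c : ℝ, x = fun _ => c :=
  kron_reduction_laplacian_general nd nu L hL hker hdd
end

section
/- (Conservation of momentum at steady state) Let p_u(t), q(t) solve ṗ_u = -B_u W q, q̇ = B_u^T M_u^{-1} p_u, with q(t) bounded for all t ≥ 0, where B_u^T has full column rank, M_u ≻ 0, W ≻ 0, and 1^T B_u = -1^T B_d with B_d W q(t) ≡ 0. Then 1^T p_u(t) = 0 for all t ≥ 0. -/
/-!
The total momentum `𝟙ᵀ p_u` is conserved: its rate of change `-𝟙ᵀ B_u W q = 𝟙ᵀ B_d W q` vanishes.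
Since `B_uᵀ` is injective, `B_u` is onto, so `B_u y = M_uᵀ 𝟙` for some `y`; then
`d/dt (y ⬝ q) = 𝟙ᵀ p_u` is a constant. A function growing at a constant rate stays bounded on
`[0, ∞)` only if that rate is zero, and `y ⬝ q` is bounded because `q` is.
-/

open Matrix

theorem Matrix.mulVec_surjective_of_injective_transpose {K m n : Type*} [Field K] [Fintype m]
    [Fintype n] {A : Matrix m n K} (hA : Function.Injective Aᵀ.mulVec) :
    Function.Surjective A.mulVec := by
  have hrank : A.rank = Fintype.card m := by
    rw [← rank_transpose, Matrix.rank, LinearMap.finrank_range_of_inj hA,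
      Module.finrank_fintype_fun_eq_card]
  have hrange : LinearMap.range A.mulVecLin = ⊤ :=
    Submodule.eq_top_of_finrank_eq <| by
      rw [← Matrix.rank, hrank, Module.finrank_fintype_fun_eq_card]
  exact LinearMap.range_eq_top.mp hrange

theorem HasDerivAt.const_dotProduct {ι : Type*} [Fintype ι] (v : ι → ℝ) {f : ℝ → ι → ℝ}
    {f' : ι → ℝ} {t : ℝ} (hf : HasDerivAt f f' t) :
    HasDerivAt (fun s => v ⬝ᵥ f s) (v ⬝ᵥ f') t :=
  HasDerivAt.fun_sum fun i _ => ((hasDerivAt_pi.mp hf) i).const_mul (v i)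

theorem abs_dotProduct_le {ι : Type*} [Fintype ι] (y v : ι → ℝ) :
    |y ⬝ᵥ v| ≤ (∑ i, |y i|) * ‖v‖ :=
  calc |y ⬝ᵥ v| ≤ ∑ i, |y i * v i| := Finset.abs_sum_le_sum_abs _ _
    _ ≤ ∑ i, |y i| * ‖v‖ := Finset.sum_le_sum fun i _ => by
        rw [abs_mul]; exact mul_le_mul_of_nonneg_left (norm_le_pi_norm v i) (abs_nonneg _)
    _ = (∑ i, |y i|) * ‖v‖ := (Finset.sum_mul _ _ _).symm

theorem eq_add_mul_of_hasDerivAt_const {f : ℝ → ℝ} {c : ℝ} (hf : ∀ t, HasDerivAt f c t) (t : ℝ) :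
    f t = f 0 + c * t := by
  have hg : ∀ s, HasDerivAt (fun u => f u - c * u) 0 s := fun s => by
    simpa using (hf s).fun_sub ((hasDerivAt_id s).const_mul c)
  have := is_const_of_deriv_eq_zero (fun s => (hg s).differentiableAt) (fun s => (hg s).deriv) t 0
  simp only [mul_zero, sub_zero] at this
  linarith

theorem eq_zero_of_hasDerivAt_const_of_bounded {f : ℝ → ℝ} {c : ℝ}
    (hf : ∀ t, HasDerivAt f c t) (hb : ∃ C, ∀ t ≥ 0, |f t| ≤ C) : c = 0 := by
  obtain ⟨C, hC⟩ := hb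
  by_contra hc
  have hc' : 0 < |c| := abs_pos.mpr hc
  set T := (2 * C + 1) / |c| with hT_def
  have hC0 : 0 ≤ C := (abs_nonneg _).trans (hC 0 le_rfl)
  have hT : 0 ≤ T := by positivity
  have hgrowth : |c * T| = 2 * C + 1 := by
    rw [abs_mul, abs_of_nonneg hT, hT_def, mul_div_cancel₀ _ hc'.ne']
  have hdrift : |c * T| ≤ 2 * C :=
    calc |c * T| = |f T - f 0| := by rw [eq_add_mul_of_hasDerivAt_const hf T, add_sub_cancel_left]
      _ ≤ |f T| + |f 0| := abs_sub _ _
      _ ≤ 2 * C := by linarith [hC T hT, hC 0 le_rfl]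
  linarith

theorem dotProduct_mul_mulVec_eq_zero {ιd ιu κ : Type*} [Fintype ιd] [Fintype ιu] [Fintype κ]
    {v : ιu → ℝ} {w : ιd → ℝ} {Bd : Matrix ιd κ ℝ} {Bu : Matrix ιu κ ℝ} {W : Matrix κ κ ℝ}
    {x : κ → ℝ} (hvw : v ᵥ* Bu = -(w ᵥ* Bd)) (hx : (Bd * W) *ᵥ x = 0) :
    v ⬝ᵥ (Bu * W) *ᵥ x = 0 := by
  rw [dotProduct_mulVec, ← vecMul_vecMul, hvw, neg_vecMul, neg_dotProduct, vecMul_vecMul,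
    ← dotProduct_mulVec, hx, dotProduct_zero, neg_zero]

theorem dotProduct_transpose_mul_inv_mulVec {ι κ : Type*} [Fintype ι] [DecidableEq ι] [Fintype κ]
    {B : Matrix ι κ ℝ} {M : Matrix ι ι ℝ} (hM : IsUnit M.det) {v p : ι → ℝ} {y : κ → ℝ}
    (hy : B *ᵥ y = Mᵀ *ᵥ v) : y ⬝ᵥ (Bᵀ * M⁻¹) *ᵥ p = v ⬝ᵥ p := by
  rw [dotProduct_mulVec, ← vecMul_vecMul, vecMul_transpose, hy, mulVec_transpose, vecMul_vecMul,
    mul_nonsing_inv M hM, vecMul_one]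

theorem conservation_of_momentum_general (nd nu m : ℕ)
    (Bd : Matrix (Fin nd) (Fin m) ℝ) (Bu : Matrix (Fin nu) (Fin m) ℝ)
    (Mu : Matrix (Fin nu) (Fin nu) ℝ) (W : Matrix (Fin m) (Fin m) ℝ)
    (hMu : Mu.PosDef)
    (hinj : ∀ x : Fin nu → ℝ, Buᵀ.mulVec x = 0 → x = 0)
    (hones : (fun _ => (1 : ℝ)) ᵥ* Bu = -((fun _ => (1 : ℝ)) ᵥ* Bd))
    (pu : ℝ → Fin nu → ℝ) (q : ℝ → Fin m → ℝ)
    (hpu : ∀ t, HasDerivAt pu (-((Bu * W).mulVec (q t))) t)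
    (hq : ∀ t, HasDerivAt q ((Buᵀ * Mu⁻¹).mulVec (pu t)) t)
    (hBd : ∀ t, (Bd * W).mulVec (q t) = 0)
    (hbound : ∃ c : ℝ, ∀ t ≥ (0 : ℝ), ‖q t‖ ≤ c) :
    ∀ t ≥ (0 : ℝ), (fun _ => (1 : ℝ)) ⬝ᵥ pu t = 0 := by
  set ones : Fin nu → ℝ := fun _ => 1
  have hmomentum : ∀ t, HasDerivAt (fun s => ones ⬝ᵥ pu s) 0 t := fun t => by
    simpa [dotProduct_neg, dotProduct_mul_mulVec_eq_zero hones (hBd t)] using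
      (hpu t).const_dotProduct ones
  have hconst : ∀ t, ones ⬝ᵥ pu t = ones ⬝ᵥ pu 0 := fun t =>
    is_const_of_deriv_eq_zero (fun s => (hmomentum s).differentiableAt)
      (fun s => (hmomentum s).deriv) t 0
  have hinj' : Function.Injective Buᵀ.mulVec := fun x x' h =>
    sub_eq_zero.mp (hinj _ (by rw [mulVec_sub, h, sub_self]))
  obtain ⟨y, hy⟩ := mulVec_surjective_of_injective_transpose hinj' (Muᵀ *ᵥ ones)
  have hdrift : ∀ t, HasDerivAt (fun s => y ⬝ᵥ q s) (ones ⬝ᵥ pu 0) t := fun t => by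
    simpa [dotProduct_transpose_mul_inv_mulVec hMu.det_pos.ne'.isUnit hy, hconst t] using
      (hq t).const_dotProduct y
  have hzero := eq_zero_of_hasDerivAt_const_of_bounded hdrift <| by
    obtain ⟨C, hC⟩ := hbound
    exact ⟨(∑ i, |y i|) * C, fun t ht => (abs_dotProduct_le y (q t)).trans
      (mul_le_mul_of_nonneg_left (hC t ht) (Finset.sum_nonneg fun i _ => abs_nonneg _))⟩
  exact fun t _ => (hconst t).trans hzero

/-- Conservation of momentum at steady state: if `ṗ_u = -B_u W q`,
`q̇ = B_uᵀ M_u⁻¹ p_u`, with `q` bounded, `B_uᵀ` injective, `𝟙ᵀB_u = -𝟙ᵀB_d` and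
`B_d W q(t) ≡ 0`, then `𝟙ᵀ p_u(t) = 0` for all `t ≥ 0`. -/
theorem conservation_of_momentum (nd nu m : ℕ)
    (Bd : Matrix (Fin nd) (Fin m) ℝ) (Bu : Matrix (Fin nu) (Fin m) ℝ)
    (Mu : Matrix (Fin nu) (Fin nu) ℝ) (W : Matrix (Fin m) (Fin m) ℝ)
    (hMu : Mu.PosDef) (hW : W.PosDef)
    (hinj : ∀ x : Fin nu → ℝ, Buᵀ.mulVec x = 0 → x = 0)
    (hones : (fun _ => (1 : ℝ)) ᵥ* Bu = -((fun _ => (1 : ℝ)) ᵥ* Bd))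
    (pu : ℝ → Fin nu → ℝ) (q : ℝ → Fin m → ℝ)
    (hpu : ∀ t, HasDerivAt pu (-((Bu * W).mulVec (q t))) t)
    (hq : ∀ t, HasDerivAt q ((Buᵀ * Mu⁻¹).mulVec (pu t)) t)
    (hBd : ∀ t, (Bd * W).mulVec (q t) = 0)
    (hbound : ∃ c : ℝ, ∀ t ≥ (0 : ℝ), ‖q t‖ ≤ c) :
    ∀ t ≥ (0 : ℝ), (fun _ => (1 : ℝ)) ⬝ᵥ pu t = 0 :=
  conservation_of_momentum_general nd nu m Bd Bu Mu W hMu hinj hones pu q hpu hq hBd hbound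
end

section
/- Consider the observed system ẋ = A x, y = C x with A = [[0, -M^{-1}L̃],[I, 0]] and C = [[L_i, 0],[R_u, 0],[0, 1^T M]], where M ≻ 0, L̃ ⪰ 0 with ker(L̃) = span{1}, and 1 ∉ ker(L_i). Then the pair (C, A) is observable if and only if for every eigenvalue μ of M^{-1}L̃, ker(M^{-1}L̃ - μI) ∩ ker(L_i) ∩ ker(R_u) = {0}. -/
/-!
Write `B = M⁻¹L̃` and `x = (x₁, x₂)`. Since `A² = diag(-B, -B)` and `𝟙ᵀM B = 𝟙ᵀL̃ = 0`, the outputs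
of `x` all vanish iff `x₁` and `B x₂` lie in the unobservable subspace `W` of `(B, [L_i; R_u])`
and `𝟙ᵀM x₁ = 𝟙ᵀM x₂ = 0`. The matrix `B` is similar to the symmetric matrix
`M^{-1/2} L̃ M^{-1/2}`, hence diagonalizable, so the `B`-invariant subspace `W` is trivial iff it
contains no eigenvector of `B`, which is the eigenvector condition. Then `B x₂ = 0` puts `x₂` in
`ker L̃ = span 𝟙`, and `𝟙ᵀM𝟙 > 0` forces `x₂ = 0`. Conversely, an eigenvector `v` of `B` in
`ker L_i ∩ ker R_u` with eigenvalue `μ ≠ 0` gives the unobservable state `(v, 0)`, because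
`μ 𝟙ᵀM v = 𝟙ᵀL̃ v = 0`; the eigenvalue `μ = 0` is excluded by `𝟙 ∉ ker L_i`.
-/

open Matrix

theorem Module.End.eq_bot_of_forall_disjoint_eigenspace {K V : Type*} [Field K] [AddCommGroup V]
    [Module K V] [FiniteDimensional K V] {f : Module.End K V}
    (hf : ⨆ μ, f.eigenspace μ = ⊤) {p : Submodule K V} (hp : ∀ x ∈ p, f x ∈ p)
    (hdisj : ∀ μ, Disjoint (f.eigenspace μ) p) : p = ⊥ := by
  by_contra hp0
  have : Nontrivial p := Submodule.nontrivial_iff_ne_bot.2 hp0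
  obtain ⟨μ, hμ⟩ :=
    exists_hasEigenvalue_of_genEigenspace_eq_top 1 (genEigenspace_restrict_eq_top hp hf)
  exact hμ (eigenspace_restrict_eq_bot hp (hdisj μ))

theorem eq_zero_of_map_eq_zero_of_eq_const {n K V : Type*} [Field K] [AddCommGroup V]
    [Module K V] {f : (n → K) →ₗ[K] V} (hf : f (fun _ => 1) ≠ 0) {v : n → K}
    (hv : ∃ c : K, v = fun _ => c)
    (hfv : f v = 0) : v = 0 := by
  obtain ⟨c, rfl⟩ := hv
  have hc : (fun _ => c : n → K) = c • fun _ => 1 := by ext; simp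
  rw [hc, map_smul, smul_eq_zero] at hfv
  rw [hc, hfv.resolve_right hf, zero_smul]

namespace Matrix

theorem fromRows_mulVec_eq_zero_iff {m₁ m₂ n R : Type*} [Fintype n] [Semiring R]
    (A₁ : Matrix m₁ n R) (A₂ : Matrix m₂ n R) (v : n → R) :
    fromRows A₁ A₂ *ᵥ v = 0 ↔ A₁ *ᵥ v = 0 ∧ A₂ *ᵥ v = 0 := by
  rw [fromRows_mulVec, ← Sum.elim_zero_zero, Sum.elim_eq_iff]

variable {m n K : Type*} [Field K] [Fintype n]

theorem dotProduct_eq_zero_of_vecMul_eq_zero_of_mulVec_eq_smul {B : Matrix n n K} {u v : n → K}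
    {μ : K} (hu : u ᵥ* B = 0) (hv : B *ᵥ v = μ • v) (hμ : μ ≠ 0) : u ⬝ᵥ v = 0 := by
  have : μ * (u ⬝ᵥ v) = 0 := by
    rw [← smul_eq_mul, ← dotProduct_smul, ← hv, dotProduct_mulVec, hu, zero_dotProduct]
  exact (mul_eq_zero.1 this).resolve_left hμ

variable [DecidableEq n]

theorem iSup_eigenspace_toLin'_eq_top_of_mul_eq_mul_diagonal {B P : Matrix n n K}
    (hP : IsUnit P) (d : n → K) (hBP : B * P = P * diagonal d) :
    ⨆ μ, Module.End.eigenspace (toLin' B) μ = ⊤ := by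
  refine eq_top_iff.2 fun v _ => ?_
  obtain ⟨w, rfl⟩ := mulVec_surjective_iff_isUnit.2 hP v
  rw [← Finset.univ_sum_single w, mulVec_sum]
  refine Submodule.sum_mem _ fun i _ => Submodule.mem_iSup_of_mem (d i) ?_
  rw [Module.End.mem_eigenspace_iff, toLin'_apply, mulVec_mulVec, hBP, ← mulVec_mulVec,
    diagonal_mulVec_single, ← smul_eq_mul, Pi.single_smul', mulVec_smul]

open scoped MatrixOrder ComplexOrder in
theorem PosDef.iSup_eigenspace_toLin'_mul_eq_top {𝕜 : Type*} [RCLike 𝕜] {M L : Matrix n n 𝕜}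
    (hM : M.PosDef) (hL : L.IsHermitian) : ⨆ μ, Module.End.eigenspace (toLin' (M * L)) μ = ⊤ := by
  set R := CFC.sqrt M
  have hR : R.IsHermitian := (CFC.sqrt_nonneg M).posSemidef.isHermitian
  have hRR : R * R = M := CFC.sqrt_mul_sqrt_self M hM.posSemidef.nonneg
  have hRunit : IsUnit R := by
    rw [isUnit_iff_isUnit_det]
    refine isUnit_mul_self_iff.1 ?_
    rw [← det_mul, hRR, ← isUnit_iff_isUnit_det]
    exact hM.isUnit
  have hS : (R * L * R).IsHermitian := by
    simpa [hR.eq] using isHermitian_conjTranspose_mul_mul R hL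
  set U : Matrix n n 𝕜 := (hS.eigenvectorUnitary : Matrix n n 𝕜)
  have hSU : R * L * R * U = U * diagonal (RCLike.ofReal ∘ hS.eigenvalues) := by
    conv_lhs => rw [hS.spectral_theorem, Unitary.conjStarAlgAut_apply]
    rw [Matrix.mul_assoc, Unitary.coe_star_mul_self, Matrix.mul_one]
  refine iSup_eigenspace_toLin'_eq_top_of_mul_eq_mul_diagonal (P := R * U)
    (hRunit.mul Unitary.isUnit_coe) (RCLike.ofReal ∘ hS.eigenvalues) ?_
  calc M * L * (R * U) = R * (R * L * R * U) := by simp only [← hRR, Matrix.mul_assoc]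
    _ = R * U * diagonal (RCLike.ofReal ∘ hS.eigenvalues) := by rw [hSU, ← Matrix.mul_assoc]

def unobservableSubspace (C : Matrix m n K) (B : Matrix n n K) : Submodule K (n → K) :=
  ⨅ j : ℕ, LinearMap.ker (C * B ^ j).mulVecLin

variable {C : Matrix m n K} {B : Matrix n n K} {w : n → K}

theorem mem_unobservableSubspace :
    w ∈ unobservableSubspace C B ↔ ∀ j : ℕ, C *ᵥ (B ^ j *ᵥ w) = 0 := by
  simp [unobservableSubspace, mulVec_mulVec]

theorem unobservableSubspace_neg : unobservableSubspace C (-B) = unobservableSubspace C B := by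
  ext w
  have hpow : ∀ j : ℕ, (-B) ^ j = (-1 : K) ^ j • B ^ j := fun j => by
    rw [← smul_pow, neg_one_smul]
  simp only [mem_unobservableSubspace, hpow, smul_mulVec, mulVec_smul, smul_eq_zero,
    pow_eq_zero_iff', neg_eq_zero, one_ne_zero, false_and, false_or]

theorem mulVec_mem_unobservableSubspace (hw : w ∈ unobservableSubspace C B) :
    B *ᵥ w ∈ unobservableSubspace C B := by
  rw [mem_unobservableSubspace] at hw ⊢
  intro j
  simpa [mulVec_mulVec, pow_succ] using hw (j + 1)

theorem mem_unobservableSubspace_of_mulVec_eq_smul {μ : K} (hw : B *ᵥ w = μ • w)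
    (hCw : C *ᵥ w = 0) : w ∈ unobservableSubspace C B := by
  have hpow : ∀ j : ℕ, B ^ j *ᵥ w = μ ^ j • w := by
    intro j
    induction j with
    | zero => simp
    | succ j ih => rw [pow_succ', ← mulVec_mulVec, ih, mulVec_smul, hw, smul_smul, ← pow_succ]
  exact mem_unobservableSubspace.2 fun j => by rw [hpow, mulVec_smul, hCw, smul_zero]

theorem unobservableSubspace_eq_bot
    (hB : ⨆ μ, Module.End.eigenspace (toLin' B) μ = ⊤)
    (h : ∀ (μ : K) (v : n → K), B *ᵥ v = μ • v → C *ᵥ v = 0 → v = 0) :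
    unobservableSubspace C B = ⊥ := by
  refine Module.End.eq_bot_of_forall_disjoint_eigenspace hB
    (fun _ => mulVec_mem_unobservableSubspace) fun μ => Submodule.disjoint_def.2 fun v hv hvW => ?_
  exact h μ v (Module.End.mem_eigenspace_iff.1 hv) (by simpa using mem_unobservableSubspace.1 hvW 0)

theorem forall_dotProduct_pow_mulVec_eq_zero_iff {u : n → K} (hu : u ᵥ* B = 0) (v : n → K) :
    (∀ j : ℕ, u ⬝ᵥ (B ^ j *ᵥ v) = 0) ↔ u ⬝ᵥ v = 0 := by
  refine ⟨fun h => by simpa using h 0, fun h j => ?_⟩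
  cases j with
  | zero => simpa using h
  | succ j => rw [pow_succ', ← mulVec_mulVec, dotProduct_mulVec, hu, zero_dotProduct]

theorem fromBlocks_zero_one_zero_pow_two_mul_mulVec (N : Matrix n n K) (j : ℕ) (x : n ⊕ n → K) :
    fromBlocks 0 N 1 0 ^ (2 * j) *ᵥ x =
      Sum.elim (N ^ j *ᵥ (x ∘ Sum.inl)) (N ^ j *ᵥ (x ∘ Sum.inr)) := by
  have hsq : fromBlocks 0 N 1 0 ^ 2 = fromBlocks N 0 0 N := by
    simp [sq, fromBlocks_multiply]
  rw [pow_mul, hsq, fromBlocks_diagonal_pow, fromBlocks_mulVec]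
  simp

theorem fromBlocks_zero_one_zero_pow_two_mul_add_one_mulVec (N : Matrix n n K) (j : ℕ)
    (x : n ⊕ n → K) :
    fromBlocks 0 N 1 0 ^ (2 * j + 1) *ᵥ x =
      Sum.elim (N ^ j *ᵥ (N *ᵥ (x ∘ Sum.inr))) (N ^ j *ᵥ (x ∘ Sum.inl)) := by
  rw [pow_succ, ← mulVec_mulVec, fromBlocks_zero_one_zero_pow_two_mul_mulVec, fromBlocks_mulVec]
  simp

theorem forall_fromBlocks_pow_mulVec_eq_zero_iff {u : n → K} (hu : u ᵥ* B = 0)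
    {A : Matrix (n ⊕ n) (n ⊕ n) K} (hA : A = fromBlocks 0 (-B) 1 0) (x : n ⊕ n → K) :
    (∀ j : ℕ, C *ᵥ ((A ^ j *ᵥ x) ∘ Sum.inl) = 0 ∧ u ⬝ᵥ ((A ^ j *ᵥ x) ∘ Sum.inr) = 0) ↔
      x ∘ Sum.inl ∈ unobservableSubspace C B ∧ B *ᵥ (x ∘ Sum.inr) ∈ unobservableSubspace C B ∧
        u ⬝ᵥ (x ∘ Sum.inl) = 0 ∧ u ⬝ᵥ (x ∘ Sum.inr) = 0 := by
  have hsplit : ∀ P : ℕ → Prop, (∀ j, P j) ↔ (∀ j, P (2 * j)) ∧ ∀ j, P (2 * j + 1) := fun P =>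
    ⟨fun h => ⟨fun j => h _, fun j => h _⟩, fun ⟨he, ho⟩ j => by
      obtain ⟨i, rfl | rfl⟩ := Nat.even_or_odd' j
      exacts [he i, ho i]⟩
  have hu' : u ᵥ* (-B) = 0 := by rw [vecMul_neg, hu, neg_zero]
  rw [hsplit, hA]
  simp only [fromBlocks_zero_one_zero_pow_two_mul_mulVec,
    fromBlocks_zero_one_zero_pow_two_mul_add_one_mulVec, Sum.elim_comp_inl, Sum.elim_comp_inr,
    forall_and, forall_dotProduct_pow_mulVec_eq_zero_iff hu', ← mem_unobservableSubspace,
    unobservableSubspace_neg, neg_mulVec, Submodule.neg_mem_iff]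
  tauto

end Matrix

theorem observability_iff_eigenvector_condition_general (k ra : ℕ)
    (M Lt Ru : Matrix (Fin k) (Fin k) ℝ) (Li : Matrix (Fin ra) (Fin k) ℝ)
    (hM : M.PosDef) (hLt : Lt.PosSemidef)
    (hker : ∀ x : Fin k → ℝ, Lt.mulVec x = 0 ↔ ∃ c : ℝ, x = fun _ => c)
    (hones : Li.mulVec (fun _ => 1) ≠ 0)
    (A : Matrix (Fin k ⊕ Fin k) (Fin k ⊕ Fin k) ℝ)
    (hA : A = Matrix.fromBlocks 0 (-(M⁻¹ * Lt)) 1 0) :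
    (∀ x : Fin k ⊕ Fin k → ℝ,
        (∀ j : ℕ,
          Li.mulVec (fun i => ((A ^ j).mulVec x) (Sum.inl i)) = 0 ∧
          Ru.mulVec (fun i => ((A ^ j).mulVec x) (Sum.inl i)) = 0 ∧
          (fun _ => (1 : ℝ)) ⬝ᵥ M.mulVec (fun i => ((A ^ j).mulVec x) (Sum.inr i)) = 0) →
        x = 0) ↔
      (∀ (μ : ℝ) (v : Fin k → ℝ),
        (M⁻¹ * Lt).mulVec v = μ • v → Li.mulVec v = 0 → Ru.mulVec v = 0 → v = 0) := by
  set e : Fin k → ℝ := fun _ => 1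
  have hMB : M * (M⁻¹ * Lt) = Lt := mul_nonsing_inv_cancel_left _ _ hM.det_pos.ne'.isUnit
  have hker' : ∀ y, (M⁻¹ * Lt) *ᵥ y = 0 → ∃ c : ℝ, y = fun _ => c := fun y hy =>
    (hker y).1 (by rw [← hMB, ← mulVec_mulVec, hy, mulVec_zero])
  have hu : e ᵥ* M ᵥ* (M⁻¹ * Lt) = 0 := by
    rw [vecMul_vecMul, hMB, ← mulVec_transpose, (isHermitian_iff_isSymm.1 hLt.isHermitian).eq,
      (hker e).2 ⟨1, rfl⟩]
  have he : e ᵥ* M ⬝ᵥ e ≠ 0 := by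
    simpa [dotProduct_mulVec] using
      (hM.dotProduct_mulVec_pos fun h : e = 0 => hones (by rw [h, mulVec_zero])).ne'
  simp only [← Function.comp_def, dotProduct_mulVec, ← and_assoc, ← fromRows_mulVec_eq_zero_iff]
  simp only [forall_fromBlocks_pow_mulVec_eq_zero_iff hu hA]
  constructor
  · intro hobs μ v hv hLi hRu
    by_cases hμ : μ = 0
    · exact eq_zero_of_map_eq_zero_of_eq_const (f := Li.mulVecLin) hones
        (hker' v (by rw [hv, hμ, zero_smul])) hLi
    have hx := hobs (Sum.elim v 0) ⟨mem_unobservableSubspace_of_mulVec_eq_smul hv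
      ((fromRows_mulVec_eq_zero_iff _ _ _).2 ⟨hLi, hRu⟩), by simp,
      by simpa using dotProduct_eq_zero_of_vecMul_eq_zero_of_mulVec_eq_smul hu hv hμ, by simp⟩
    simpa using congrArg (· ∘ Sum.inl) hx
  · rintro hR x ⟨hx₁, hBx₂, _, hx₂⟩
    have hW : unobservableSubspace (fromRows Li Ru) (M⁻¹ * Lt) = ⊥ :=
      unobservableSubspace_eq_bot (hM.inv.iSup_eigenspace_toLin'_mul_eq_top hLt.isHermitian)
        fun μ v hv hC => ((fromRows_mulVec_eq_zero_iff _ _ _).1 hC).elim (hR μ v hv)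
    rw [hW, Submodule.mem_bot] at hx₁ hBx₂
    rw [← Sum.elim_comp_inl_inr x, hx₁, eq_zero_of_map_eq_zero_of_eq_const
      (f := dotProductEquiv ℝ _ (e ᵥ* M)) he (hker' _ hBx₂) hx₂, Sum.elim_zero_zero]

/-- For `A = [[0, -M⁻¹L̃],[I, 0]]` and outputs `C = [[L_i, 0],[R_u, 0],[0, 𝟙ᵀM]]`,
the pair `(C, A)` is observable iff for every eigenvalue `μ` of `M⁻¹L̃`,
`ker(M⁻¹L̃ - μI) ∩ ker(L_i) ∩ ker(R_u) = {0}`. -/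
theorem observability_iff_eigenvector_condition (k ra : ℕ)
    (M Lt Ru : Matrix (Fin k) (Fin k) ℝ) (Li : Matrix (Fin ra) (Fin k) ℝ)
    (hM : M.PosDef) (hLt : Lt.PosSemidef) (hRu : Ru.PosSemidef)
    (hker : ∀ x : Fin k → ℝ, Lt.mulVec x = 0 ↔ ∃ c : ℝ, x = fun _ => c)
    (hones : Li.mulVec (fun _ => 1) ≠ 0)
    (A : Matrix (Fin k ⊕ Fin k) (Fin k ⊕ Fin k) ℝ)
    (hA : A = Matrix.fromBlocks 0 (-(M⁻¹ * Lt)) 1 0) :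
    (∀ x : Fin k ⊕ Fin k → ℝ,
        (∀ j : ℕ,
          Li.mulVec (fun i => ((A ^ j).mulVec x) (Sum.inl i)) = 0 ∧
          Ru.mulVec (fun i => ((A ^ j).mulVec x) (Sum.inl i)) = 0 ∧
          (fun _ => (1 : ℝ)) ⬝ᵥ M.mulVec (fun i => ((A ^ j).mulVec x) (Sum.inr i)) = 0) →
        x = 0) ↔
      (∀ (μ : ℝ) (v : Fin k → ℝ),
        (M⁻¹ * Lt).mulVec v = μ • v → Li.mulVec v = 0 → Ru.mulVec v = 0 → v = 0) :=
  observability_iff_eigenvector_condition_general k ra M Lt Ru Li hM hLt hker hones A hA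
end

section
/- Let M ≻ 0 block diagonal as diag(M_d, M_u), L = [[L_dd, L_di],[L_di^T, L_uu]] a connected weighted graph Laplacian, R = diag(R_d, R_u) with R_d ≻ 0, and L̃_u = L_uu - L_di^T L_dd^{-1} L_di. Then the following are equivalent: (ii) for each eigenvalue μ of M_u^{-1}L̃_u, ker(M_u^{-1}L̃_u - μI) ∩ ker(L_di) ∩ ker(R_u) = {0}; (iii) for each eigenvalue μ of M^{-1}L, every vector in ker(M^{-1}L - μI) ∩ ker(R) that has zero entries on the damped block is zero. -/
/-!
A vector vanishing on the damped block has the form `(0, v)`. Because `M` is block diagonal,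
`M⁻¹ L (0, v) = (M_d⁻¹ L_di v, M_u⁻¹ L_uu v)`, so `(0, v)` is a `μ`-eigenvector of `M⁻¹ L` iff
`L_di v = 0` and `M_u⁻¹ L_uu v = μ v`. On `ker L_di` the Kron reduction `L̃_u` acts as `L_uu`,
and `R (0, v) = (0, R_u v)`, so the two conditions quantify over the same vectors `v`.
-/

open Matrix

namespace Matrix

variable {m n R : Type*} [Fintype m] [Fintype n]

theorem mulVec_sumElim_zero [NonUnitalNonAssocSemiring R] (L : Matrix (m ⊕ n) (m ⊕ n) R)
    (v : n → R) :
    L *ᵥ Sum.elim (0 : m → R) v =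
      Sum.elim (L.submatrix Sum.inl Sum.inr *ᵥ v) (L.submatrix Sum.inr Sum.inr *ᵥ v) := by
  rw [← fromBlocks_toBlocks L, fromBlocks_mulVec]
  simp [toBlocks₁₂, toBlocks₂₂, submatrix]

theorem sub_mul_mulVec_of_mulVec_eq_zero [NonUnitalRing R] {l : Type*} [Fintype l]
    (D : Matrix n n R) (C : Matrix n l R) {B : Matrix l n R} {v : n → R} (hv : B *ᵥ v = 0) :
    (D - C * B) *ᵥ v = D *ᵥ v := by
  rw [sub_mulVec, ← mulVec_mulVec, hv, mulVec_zero, sub_zero]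

variable [DecidableEq m] [DecidableEq n] [CommRing R]

theorem inv_fromBlocks_zero_zero_of_isUnit_iff (A : Matrix m m R) (D : Matrix n n R)
    (hAD : IsUnit A ↔ IsUnit D) :
    (fromBlocks A 0 0 D)⁻¹ = fromBlocks A⁻¹ 0 0 D⁻¹ := by
  simp [inv_fromBlocks_zero₁₂_of_isUnit_iff A 0 D hAD]

theorem inv_fromBlocks_mul_mulVec_sumElim_zero_eq_smul_iff {A : Matrix m m R}
    {D : Matrix n n R} (hA : IsUnit A) (hD : IsUnit D) (L : Matrix (m ⊕ n) (m ⊕ n) R)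
    (v : n → R) (μ : R) :
    ((fromBlocks A 0 0 D)⁻¹ * L) *ᵥ Sum.elim (0 : m → R) v = μ • Sum.elim (0 : m → R) v ↔
      L.submatrix Sum.inl Sum.inr *ᵥ v = 0 ∧
        (D⁻¹ * L.submatrix Sum.inr Sum.inr) *ᵥ v = μ • v := by
  have hA_inv : Function.Injective A⁻¹.mulVec :=
    mulVec_injective_of_isUnit (isUnit_nonsing_inv_iff.2 hA)
  have smul_elim : μ • Sum.elim (0 : m → R) v = Sum.elim (0 : m → R) (μ • v) := by
    ext (i | j) <;> simp
  rw [← mulVec_mulVec, mulVec_sumElim_zero,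
    inv_fromBlocks_zero_zero_of_isUnit_iff A D (iff_of_true hA hD), fromBlocks_mulVec, smul_elim]
  simp [Sum.elim_eq_iff, ← mulVec_mulVec, hA_inv.eq_iff' (mulVec_zero _)]

end Matrix

theorem kron_eigenvector_condition_equiv_general (nd nu : ℕ)
    (L : Matrix (Fin nd ⊕ Fin nu) (Fin nd ⊕ Fin nu) ℝ)
    (Md Rd : Matrix (Fin nd) (Fin nd) ℝ) (Mu Ru : Matrix (Fin nu) (Fin nu) ℝ)
    (hMd : Md.PosDef) (hMu : Mu.PosDef)
    (Ltu : Matrix (Fin nu) (Fin nu) ℝ)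
    (hLtu : Ltu = L.submatrix Sum.inr Sum.inr -
      (L.submatrix Sum.inl Sum.inr)ᵀ * (L.submatrix Sum.inl Sum.inl)⁻¹ *
        L.submatrix Sum.inl Sum.inr) :
    (∀ (μ : ℝ) (v : Fin nu → ℝ),
        (Mu⁻¹ * Ltu).mulVec v = μ • v →
        (L.submatrix Sum.inl Sum.inr).mulVec v = 0 →
        Ru.mulVec v = 0 → v = 0) ↔
      (∀ (μ : ℝ) (x : Fin nd ⊕ Fin nu → ℝ),
        ((Matrix.fromBlocks Md 0 0 Mu)⁻¹ * L).mulVec x = μ • x →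
        (Matrix.fromBlocks Rd 0 0 Ru).mulVec x = 0 →
        (∀ i, x (Sum.inl i) = 0) → x = 0) := by
  have eigen_iff (μ : ℝ) (v : Fin nu → ℝ) :
      ((fromBlocks Md 0 0 Mu)⁻¹ * L) *ᵥ Sum.elim (0 : Fin nd → ℝ) v =
          μ • Sum.elim (0 : Fin nd → ℝ) v ↔
        L.submatrix Sum.inl Sum.inr *ᵥ v = 0 ∧ (Mu⁻¹ * Ltu) *ᵥ v = μ • v := by
    rw [inv_fromBlocks_mul_mulVec_sumElim_zero_eq_smul_iff hMd.isUnit hMu.isUnit]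
    refine and_congr_right fun hB => ?_
    rw [← mulVec_mulVec, ← mulVec_mulVec, hLtu, sub_mul_mulVec_of_mulVec_eq_zero _ _ hB]
  have damping_iff (v : Fin nu → ℝ) :
      fromBlocks Rd 0 0 Ru *ᵥ Sum.elim (0 : Fin nd → ℝ) v = 0 ↔ Ru *ᵥ v = 0 := by
    simp [fromBlocks_mulVec, ← Sum.elim_zero_zero, Sum.elim_eq_iff]
  constructor
  · intro h μ x hx hRx hx_inl
    obtain ⟨v, rfl⟩ : ∃ v, x = Sum.elim (0 : Fin nd → ℝ) v :=
      ⟨x ∘ Sum.inr, by ext (i | j); exacts [hx_inl i, rfl]⟩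
    obtain ⟨hB, hv⟩ := (eigen_iff μ v).1 hx
    rw [h μ v hv hB ((damping_iff v).1 hRx), Sum.elim_zero_zero]
  · intro h μ v hv hB hRv
    have hx0 := h μ (Sum.elim 0 v) ((eigen_iff μ v).2 ⟨hB, hv⟩) ((damping_iff v).2 hRv)
      fun _ => rfl
    exact Sum.elim_injective' (hx0.trans Sum.elim_zero_zero.symm)

/-- Equivalence of conditions (ii) and (iii) of Theorem 1: the eigenvector condition
for the Kron-reduced matrix `M_u⁻¹ L̃_u` is equivalent to the eigenvector condition
for the full matrix `M⁻¹ L`. -/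
theorem kron_eigenvector_condition_equiv (nd nu : ℕ) (hnd : 0 < nd) (hnu : 0 < nu)
    (L : Matrix (Fin nd ⊕ Fin nu) (Fin nd ⊕ Fin nu) ℝ)
    (hL : L.PosSemidef)
    (hker : ∀ x : Fin nd ⊕ Fin nu → ℝ, L.mulVec x = 0 ↔ ∃ c : ℝ, x = fun _ => c)
    (hdd : IsUnit (L.submatrix Sum.inl Sum.inl))
    (Md Rd : Matrix (Fin nd) (Fin nd) ℝ) (Mu Ru : Matrix (Fin nu) (Fin nu) ℝ)
    (hMd : Md.PosDef) (hMu : Mu.PosDef) (hRd : Rd.PosDef) (hRu : Ru.PosSemidef)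
    (Ltu : Matrix (Fin nu) (Fin nu) ℝ)
    (hLtu : Ltu = L.submatrix Sum.inr Sum.inr -
      (L.submatrix Sum.inl Sum.inr)ᵀ * (L.submatrix Sum.inl Sum.inl)⁻¹ *
        L.submatrix Sum.inl Sum.inr) :
    (∀ (μ : ℝ) (v : Fin nu → ℝ),
        (Mu⁻¹ * Ltu).mulVec v = μ • v →
        (L.submatrix Sum.inl Sum.inr).mulVec v = 0 →
        Ru.mulVec v = 0 → v = 0) ↔
      (∀ (μ : ℝ) (x : Fin nd ⊕ Fin nu → ℝ),
        ((Matrix.fromBlocks Md 0 0 Mu)⁻¹ * L).mulVec x = μ • x →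
        (Matrix.fromBlocks Rd 0 0 Ru).mulVec x = 0 →
        (∀ i, x (Sum.inl i) = 0) → x = 0) :=
  kron_eigenvector_condition_equiv_general nd nu L Md Rd Mu Ru hMd hMu Ltu hLtu
end
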